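/- Let u : D → ℝ be a C³ function on an open set D ⊂ ℂ satisfying the elliptic Liouville equation u_xx + u_yy = 2e^u (equivalently 4 u_{z z̄} = 2 e^u). Define ξ = u_{zz} - (1/2)(u_z)². Then ∂ξ/∂z̄ = 0 on D. -/

import Mathlib

/-!
With `U = (u : ℂ)` and `Δ = 4 ∂_z ∂_z̄`, the Liouville equation reads `∂_z̄ ∂_z U = e^U / 2`.
Since `∂_z` and `∂_z̄` commute on `C²` functions (symmetry of the second derivative),
`∂_z̄ ξ = ∂_z (∂_z̄ ∂_z U) - ∂_z U · ∂_z̄ ∂_z U = ∂_z (e^U / 2) - ∂_z U · e^U / 2 = 0`.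
-/

/-- The Wirtinger derivative `∂W/∂z = (1/2)(∂_x - i ∂_y) W` of a complex
function. -/
noncomputable def wirtingerZ (W : ℂ → ℂ) (z : ℂ) : ℂ :=
  (1 / 2 : ℂ) * (fderiv ℝ W z 1 - Complex.I * fderiv ℝ W z Complex.I)

/-- The Wirtinger derivative `∂W/∂z̄ = (1/2)(∂_x + i ∂_y) W` of a complex
function. -/
noncomputable def wirtingerZbar (W : ℂ → ℂ) (z : ℂ) : ℂ :=
  (1 / 2 : ℂ) * (fderiv ℝ W z 1 + Complex.I * fderiv ℝ W z Complex.I)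

/-- The Wirtinger derivative `u_z = (1/2)(u_x - i u_y)` of a real-valued
function. -/
noncomputable def wirtingerZReal (u : ℂ → ℝ) (z : ℂ) : ℂ :=
  (1 / 2 : ℂ) * ((fderiv ℝ u z 1 : ℝ) - Complex.I * ((fderiv ℝ u z Complex.I : ℝ) : ℂ))

open Complex Filter Topology

theorem fderiv_fderiv_apply {𝕜 E F : Type*} [NontriviallyNormedField 𝕜] [NormedAddCommGroup E]
    [NormedSpace 𝕜 E] [NormedAddCommGroup F] [NormedSpace 𝕜 F] {f : E → F} {x : E}
    (hf : DifferentiableAt 𝕜 (fderiv 𝕜 f) x) (v e : E) :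
    fderiv 𝕜 (fun w => fderiv 𝕜 f w v) x e = fderiv 𝕜 (fderiv 𝕜 f) x e v := by
  simp [fderiv_clm_apply hf (differentiableAt_const v)]

theorem fderiv_ofReal_comp {E : Type*} [NormedAddCommGroup E] [NormedSpace ℝ E] (u : E → ℝ)
    (x : E) : fderiv ℝ (fun w => (u w : ℂ)) x = ofRealCLM.comp (fderiv ℝ u x) := by
  by_cases hu : DifferentiableAt ℝ u x
  · exact (ofRealCLM.hasFDerivAt.comp x hu.hasFDerivAt).fderiv
  · have hU : ¬DifferentiableAt ℝ (fun w => (u w : ℂ)) x := fun h =>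
      hu (reCLM.differentiableAt.comp x h)
    simp [fderiv_zero_of_not_differentiableAt hu, fderiv_zero_of_not_differentiableAt hU]

theorem fderiv_fderiv_ofReal_comp_apply {E : Type*} [NormedAddCommGroup E] [NormedSpace ℝ E]
    (u : E → ℝ) (x v e : E) :
    fderiv ℝ (fun w => fderiv ℝ (fun y => (u y : ℂ)) w v) x e =
      fderiv ℝ (fun w => fderiv ℝ u w v) x e := by
  simp [fderiv_ofReal_comp]

theorem wirtingerZReal_eq_wirtingerZ (u : ℂ → ℝ) :
    wirtingerZReal u = wirtingerZ (fun w => (u w : ℂ)) := by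
  ext z
  simp [wirtingerZReal, wirtingerZ, fderiv_ofReal_comp]

section Wirtinger

variable {f g : ℂ → ℂ} {z : ℂ}

theorem Filter.EventuallyEq.wirtingerZ_eq (h : f =ᶠ[𝓝 z] g) :
    wirtingerZ f z = wirtingerZ g z := by
  rw [wirtingerZ, wirtingerZ, h.fderiv_eq]

theorem wirtingerZ_const_mul (c : ℂ) (hf : DifferentiableAt ℝ f z) :
    wirtingerZ (fun w => c * f w) z = c * wirtingerZ f z := by
  simp only [wirtingerZ, fderiv_const_mul hf, smul_apply, smul_eq_mul]
  ring

theorem wirtingerZ_cexp (hf : DifferentiableAt ℝ f z) :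
    wirtingerZ (fun w => cexp (f w)) z = cexp (f z) * wirtingerZ f z := by
  simp only [wirtingerZ, hf.hasFDerivAt.cexp.fderiv, smul_apply, smul_eq_mul]
  ring

theorem wirtingerZbar_sub (hf : DifferentiableAt ℝ f z) (hg : DifferentiableAt ℝ g z) :
    wirtingerZbar (fun w => f w - g w) z = wirtingerZbar f z - wirtingerZbar g z := by
  simp only [wirtingerZbar, fderiv_fun_sub hf hg, sub_apply]
  ring

theorem wirtingerZbar_const_mul (c : ℂ) (hf : DifferentiableAt ℝ f z) :
    wirtingerZbar (fun w => c * f w) z = c * wirtingerZbar f z := by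
  simp only [wirtingerZbar, fderiv_const_mul hf, smul_apply, smul_eq_mul]
  ring

theorem wirtingerZbar_sq (hf : DifferentiableAt ℝ f z) :
    wirtingerZbar (fun w => f w ^ 2) z = 2 * f z * wirtingerZbar f z := by
  simp only [wirtingerZbar, fderiv_fun_pow 2 hf, smul_apply, smul_eq_mul]
  ring

theorem ContDiffAt.wirtingerZ {n m : WithTop ℕ∞} (hf : ContDiffAt ℝ n f z) (hmn : m + 1 ≤ n) :
    ContDiffAt ℝ m (wirtingerZ f) z := by
  have hf' := hf.fderiv_right hmn
  unfold _root_.wirtingerZ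
  fun_prop

theorem fderiv_wirtingerZ_apply (hf : DifferentiableAt ℝ (fderiv ℝ f) z) (e : ℂ) :
    fderiv ℝ (wirtingerZ f) z e =
      (1 / 2) * (fderiv ℝ (fderiv ℝ f) z e 1 - I * fderiv ℝ (fderiv ℝ f) z e I) := by
  have hpartial (v : ℂ) : DifferentiableAt ℝ (fun w => fderiv ℝ f w v) z :=
    hf.clm_apply (differentiableAt_const v)
  unfold wirtingerZ
  rw [fderiv_const_mul ((hpartial 1).fun_sub ((hpartial I).const_mul I)),
    fderiv_fun_sub (hpartial 1) ((hpartial I).const_mul I), fderiv_const_mul (hpartial I)]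
  simp only [fderiv_fderiv_apply hf, smul_apply, sub_apply, smul_eq_mul]

theorem fderiv_wirtingerZbar_apply (hf : DifferentiableAt ℝ (fderiv ℝ f) z) (e : ℂ) :
    fderiv ℝ (wirtingerZbar f) z e =
      (1 / 2) * (fderiv ℝ (fderiv ℝ f) z e 1 + I * fderiv ℝ (fderiv ℝ f) z e I) := by
  have hpartial (v : ℂ) : DifferentiableAt ℝ (fun w => fderiv ℝ f w v) z :=
    hf.clm_apply (differentiableAt_const v)
  unfold wirtingerZbar
  rw [fderiv_const_mul ((hpartial 1).fun_add ((hpartial I).const_mul I)),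
    fderiv_fun_add (hpartial 1) ((hpartial I).const_mul I), fderiv_const_mul (hpartial I)]
  simp only [fderiv_fderiv_apply hf, smul_apply, add_apply, smul_eq_mul]

theorem four_mul_wirtingerZbar_wirtingerZ (hf : ContDiffAt ℝ 2 f z) :
    4 * wirtingerZbar (wirtingerZ f) z =
      fderiv ℝ (fun w => fderiv ℝ f w 1) z 1 + fderiv ℝ (fun w => fderiv ℝ f w I) z I := by
  have hd : DifferentiableAt ℝ (fderiv ℝ f) z :=
    (hf.fderiv_right (m := 1) le_rfl).differentiableAt one_ne_zero
  have hsymm := hf.isSymmSndFDerivAt (by simp [minSmoothness_of_isRCLikeNormedField])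
  rw [wirtingerZbar, fderiv_wirtingerZ_apply hd, fderiv_wirtingerZ_apply hd,
    fderiv_fderiv_apply hd, fderiv_fderiv_apply hd, hsymm I 1]
  linear_combination (-fderiv ℝ (fderiv ℝ f) z I I) * I_sq

theorem wirtingerZbar_wirtingerZ_comm (hf : ContDiffAt ℝ 2 f z) :
    wirtingerZbar (wirtingerZ f) z = wirtingerZ (wirtingerZbar f) z := by
  have hd : DifferentiableAt ℝ (fderiv ℝ f) z :=
    (hf.fderiv_right (m := 1) le_rfl).differentiableAt one_ne_zero
  have hsymm := hf.isSymmSndFDerivAt (by simp [minSmoothness_of_isRCLikeNormedField])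
  rw [wirtingerZbar, wirtingerZ, fderiv_wirtingerZ_apply hd, fderiv_wirtingerZ_apply hd,
    fderiv_wirtingerZbar_apply hd, fderiv_wirtingerZbar_apply hd, hsymm I 1]
  ring

end Wirtinger

noncomputable def liouvilleInvariant (f : ℂ → ℂ) : ℂ → ℂ :=
  fun z => wirtingerZ (wirtingerZ f) z - (1 / 2 : ℂ) * wirtingerZ f z ^ 2

theorem wirtingerZbar_liouvilleInvariant_eq_zero {f : ℂ → ℂ} {z : ℂ} (hf : ContDiffAt ℝ 3 f z)
    (hf_liouville : wirtingerZbar (wirtingerZ f) =ᶠ[𝓝 z] fun w => (1 / 2) * cexp (f w)) :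
    wirtingerZbar (liouvilleInvariant f) z = 0 := by
  have hdf : DifferentiableAt ℝ f z := hf.differentiableAt (by norm_num)
  have hWf : ContDiffAt ℝ 2 (wirtingerZ f) z := hf.wirtingerZ (by norm_num)
  have hdW : DifferentiableAt ℝ (wirtingerZ f) z := hWf.differentiableAt two_ne_zero
  have hdWW : DifferentiableAt ℝ (wirtingerZ (wirtingerZ f)) z :=
    (hWf.wirtingerZ (m := 1) (by norm_num)).differentiableAt one_ne_zero
  calc wirtingerZbar (liouvilleInvariant f) z
      = wirtingerZ (wirtingerZbar (wirtingerZ f)) z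
          - wirtingerZ f z * wirtingerZbar (wirtingerZ f) z := by
        unfold liouvilleInvariant
        rw [wirtingerZbar_sub hdWW ((hdW.fun_pow 2).const_mul _),
          wirtingerZbar_const_mul _ (hdW.fun_pow 2), wirtingerZbar_sq hdW,
          wirtingerZbar_wirtingerZ_comm hWf]
        ring
    _ = wirtingerZ (fun w => (1 / 2) * cexp (f w)) z
          - wirtingerZ f z * ((1 / 2) * cexp (f z)) := by
        rw [hf_liouville.wirtingerZ_eq, hf_liouville.eq_of_nhds]
    _ = 0 := by
        rw [wirtingerZ_const_mul _ hdf.cexp, wirtingerZ_cexp hdf]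
        ring

/-- If `u` is a `C³` real solution of the elliptic Liouville equation
`u_xx + u_yy = 2 e^u` on an open set `D`, then `ξ = u_zz - (1/2) u_z²`
satisfies `∂ξ/∂z̄ = 0` on `D`. -/
theorem stmt10 (D : Set ℂ) (hD : IsOpen D) (u : ℂ → ℝ)
    (hu : ContDiffOn ℝ 3 u D)
    (hpde : ∀ z ∈ D,
      fderiv ℝ (fun w => fderiv ℝ u w 1) z 1 +
        fderiv ℝ (fun w => fderiv ℝ u w Complex.I) z Complex.I
        = 2 * Real.exp (u z)) :
    let ξ : ℂ → ℂ := fun z =>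
      wirtingerZ (wirtingerZReal u) z - (1 / 2 : ℂ) * (wirtingerZReal u z) ^ 2
    ∀ z ∈ D, wirtingerZbar ξ z = 0 := by
  intro ξ z hz
  set U : ℂ → ℂ := fun w => (u w : ℂ)
  have hU : ∀ w ∈ D, ContDiffAt ℝ 3 U w := fun w hw =>
    ofRealCLM.contDiff.comp_contDiffAt w (hu.contDiffAt (hD.mem_nhds hw))
  have hU_liouville : wirtingerZbar (wirtingerZ U) =ᶠ[𝓝 z] fun w => (1 / 2) * cexp (U w) := by
    filter_upwards [hD.mem_nhds hz] with w hw
    have hlap := four_mul_wirtingerZbar_wirtingerZ ((hU w hw).of_le (by norm_num))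
    rw [fderiv_fderiv_ofReal_comp_apply, fderiv_fderiv_ofReal_comp_apply] at hlap
    have hpde_w := congrArg ofReal (hpde w hw)
    push_cast at hpde_w
    linear_combination (1 / 4) * hlap + (1 / 4) * hpde_w
  have hξ : ξ = liouvilleInvariant U := by
    simp only [ξ, wirtingerZReal_eq_wirtingerZ]
    rfl
  rw [hξ]
  exact wirtingerZbar_liouvilleInvariant_eq_zero (hU z hz) hU_liouville
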